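/- (Calendar-arbitrage condition implies call prices nondecreasing in expiry.) Fix k ∈ ℝ and let v : (0,∞) → (0,∞) be such that τ ↦ v(τ)·√τ is nondecreasing. Then τ ↦ BS(τ,k,v(τ)) is nondecreasing on (0,∞). -/

import Mathlib

/-!
The Black–Scholes price depends on `τ` and `v` only through the total volatility `w = v √τ`,
and as a function of `w > 0` it has derivative `φ(d₁) > 0` (the vega): the two terms
`±φ(d_i) · ∂d_i/∂w` combine because `e^k φ(d₂) = φ(d₁)` and `∂d₁/∂w - ∂d₂/∂w = 1`.
So the price is strictly increasing in `w`, and composing with the nondecreasing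
`τ ↦ v(τ) √τ` gives the claim.
-/

open Real Filter Set

/-- Standard normal probability density function. -/
noncomputable def stdGaussPDF (x : ℝ) : ℝ :=
  (Real.sqrt (2 * Real.pi))⁻¹ * Real.exp (-(x ^ 2) / 2)

/-- Standard normal cumulative distribution function. -/
noncomputable def stdGaussCDF (x : ℝ) : ℝ :=
  ∫ t in Set.Iic x, stdGaussPDF t

/-- d1 term of the Black–Scholes formula. -/
noncomputable def d1 (τ k v : ℝ) : ℝ :=
  -k / (v * Real.sqrt τ) + v * Real.sqrt τ / 2

/-- d2 term of the Black–Scholes formula. -/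
noncomputable def d2 (τ k v : ℝ) : ℝ :=
  -k / (v * Real.sqrt τ) - v * Real.sqrt τ / 2

/-- Black–Scholes call price in units of the forward. -/
noncomputable def BS (τ k v : ℝ) : ℝ :=
  stdGaussCDF (d1 τ k v) - Real.exp k * stdGaussCDF (d2 τ k v)

/-- The butterfly functional. -/
noncomputable def But (τ k v₀ v₁ v₂ : ℝ) : ℝ :=
  (1 + d1 τ k v₀ * v₁ * Real.sqrt τ) * (1 + d2 τ k v₀ * v₁ * Real.sqrt τ) + v₀ * v₂ * τ

open MeasureTheory intervalIntegral

lemma stdGaussPDF_pos (x : ℝ) : 0 < stdGaussPDF x := by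
  unfold stdGaussPDF
  positivity

lemma continuous_stdGaussPDF : Continuous stdGaussPDF := by
  unfold stdGaussPDF
  fun_prop

lemma integrable_stdGaussPDF : Integrable stdGaussPDF := by
  convert (integrable_exp_neg_mul_sq (b := 1 / 2) (by norm_num)).const_mul
    (Real.sqrt (2 * Real.pi))⁻¹ using 2 with x
  unfold stdGaussPDF
  ring_nf

lemma stdGaussCDF_eq_add_intervalIntegral (x : ℝ) :
    stdGaussCDF x = stdGaussCDF 0 + ∫ t in (0 : ℝ)..x, stdGaussPDF t := by
  have := integral_Iic_sub_Iic (μ := volume) (integrable_stdGaussPDF.integrableOn (s := Iic 0))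
    (integrable_stdGaussPDF.integrableOn (s := Iic x))
  simp only [stdGaussCDF]
  linarith

lemma hasDerivAt_stdGaussCDF (x : ℝ) : HasDerivAt stdGaussCDF (stdGaussPDF x) x := by
  have hint : HasDerivAt (fun y => ∫ t in (0 : ℝ)..y, stdGaussPDF t) (stdGaussPDF x) x :=
    (integral_hasStrictDerivAt_right integrable_stdGaussPDF.intervalIntegrable
      (continuous_stdGaussPDF.stronglyMeasurableAtFilter _ _)
      continuous_stdGaussPDF.continuousAt).hasDerivAt
  refine (hint.const_add (stdGaussCDF 0)).congr_of_eventuallyEq (Eventually.of_forall ?_)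
  exact stdGaussCDF_eq_add_intervalIntegral

noncomputable def callPrice (k w : ℝ) : ℝ :=
  stdGaussCDF (-k / w + w / 2) - Real.exp k * stdGaussCDF (-k / w - w / 2)

lemma BS_eq_callPrice (τ k v : ℝ) : BS τ k v = callPrice k (v * Real.sqrt τ) := rfl

lemma exp_mul_stdGaussPDF_d2 (k : ℝ) {w : ℝ} (hw : w ≠ 0) :
    Real.exp k * stdGaussPDF (-k / w - w / 2) = stdGaussPDF (-k / w + w / 2) := by
  have hexp : k + -(-k / w - w / 2) ^ 2 / 2 = -(-k / w + w / 2) ^ 2 / 2 := by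
    field_simp
    ring
  unfold stdGaussPDF
  rw [mul_left_comm, ← Real.exp_add, hexp]

lemma hasDerivAt_neg_div (k : ℝ) {w : ℝ} (hw : w ≠ 0) :
    HasDerivAt (fun w : ℝ => -k / w) (k / w ^ 2) w := by
  have h := (hasDerivAt_inv hw).const_mul (-k)
  simp only [← div_eq_mul_inv, neg_mul_neg] at h
  simpa only [div_eq_mul_inv, one_mul] using h

lemma hasDerivAt_callPrice (k : ℝ) {w : ℝ} (hw : w ≠ 0) :
    HasDerivAt (callPrice k) (stdGaussPDF (-k / w + w / 2)) w := by
  have hd1 : HasDerivAt (fun w => -k / w + w / 2) (k / w ^ 2 + 1 / 2) w :=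
    (hasDerivAt_neg_div k hw).add ((hasDerivAt_id' w).div_const 2)
  have hd2 : HasDerivAt (fun w => -k / w - w / 2) (k / w ^ 2 - 1 / 2) w :=
    (hasDerivAt_neg_div k hw).sub ((hasDerivAt_id' w).div_const 2)
  have H := ((hasDerivAt_stdGaussCDF _).comp w hd1).sub
    (((hasDerivAt_stdGaussCDF _).comp w hd2).const_mul (Real.exp k))
  rw [← mul_assoc, exp_mul_stdGaussPDF_d2 k hw] at H
  exact H.congr_deriv (by ring)

lemma callPrice_strictMonoOn (k : ℝ) : StrictMonoOn (callPrice k) (Ioi 0) := by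
  refine strictMonoOn_of_deriv_pos (convex_Ioi 0)
    (fun w hw => (hasDerivAt_callPrice k (ne_of_gt hw)).continuousAt.continuousWithinAt)
    fun w hw => ?_
  rw [interior_Ioi] at hw
  rw [(hasDerivAt_callPrice k (ne_of_gt hw)).deriv]
  exact stdGaussPDF_pos _

theorem stmt8 (k : ℝ) (v : ℝ → ℝ) (hv : ∀ τ, 0 < τ → 0 < v τ)
    (hmono : MonotoneOn (fun τ => v τ * Real.sqrt τ) (Set.Ioi (0 : ℝ))) :
    MonotoneOn (fun τ => BS τ k (v τ)) (Set.Ioi (0 : ℝ)) := by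
  have hw : MapsTo (fun τ => v τ * Real.sqrt τ) (Ioi 0) (Ioi 0) := fun τ hτ =>
    mul_pos (hv τ hτ) (Real.sqrt_pos.mpr hτ)
  simp_rw [BS_eq_callPrice]
  exact (callPrice_strictMonoOn k).monotoneOn.comp hmono hw
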